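/- Let M > 0, M' > M, r < 0, and b ∈ ℝ. There exists a constant C > 0 such that for all x ∈ ℝ and all t > 0: ∫_{−∞}^0 t^{−1/2} e^{−(x−ry−bt)²/(Mt)} (1+|y|)^{−3/2} dy ≤ C ( min( t^{−1/2}, (1+|x−bt|)^{−3/2} ) + (1+t)^{−1/2} e^{−(x−bt)²/(M't)} ). -/

import Mathlib

/-!
Reflecting `y = -s` and writing `z = x - b t`, `ρ = -r > 0`, the integral becomes
`∫_{s>0} t^{-1/2} e^{-(z-ρs)²/(Mt)} (1+s)^{-q} ds` with `q = 3/2`. Fix `σ < 1` with `σ² M' > M`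
and split the half-line according to whether `|z - ρs| < σ|z|`.

On the far part `ρ s > (1-σ)|z|`, so the weight is `≲ (1+|z|)^{-q}`, while the kernel integrates
to `O(1)`; bounding the kernel by `1` instead gives `O(t^{-1/2})`.
On the near part `(z-ρs)²/M ≥ z²/M' + (z-ρs)²/N` for a suitable `N`, so the kernel is at most
`e^{-z²/(M't)}` times a wider Gaussian; integrating the Gaussian or the weight gives
`e^{-z²/(M't)} min(1, t^{-1/2}) ≲ (1+t)^{-1/2} e^{-z²/(M't)}`.
-/

open MeasureTheory Set Real Filter Topology

theorem integrableOn_one_add_rpow_neg_Ioi {q : ℝ} (hq : 1 < q) :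
    IntegrableOn (fun s : ℝ => (1 + s) ^ (-q)) (Ioi 0) := by
  simpa only [add_comm] using
    integrableOn_add_rpow_Ioi_of_lt (a := -q) (m := 1) (by linarith) (by norm_num)

theorem integral_one_add_rpow_neg_Ioi {q : ℝ} (hq : 1 < q) :
    ∫ s in Ioi (0 : ℝ), (1 + s) ^ (-q) = 1 / (q - 1) := by
  have hderiv : ∀ s ∈ Ici (0 : ℝ),
      HasDerivAt (fun s => -(1 + s) ^ (1 - q) / (q - 1)) ((1 + s) ^ (-q)) s := by
    intro s hs
    have hs1 : 1 + id s ≠ 0 := by rw [id]; linarith [mem_Ici.1 hs]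
    convert! ((((hasDerivAt_id s).const_add 1).rpow_const (p := 1 - q)
      (Or.inl hs1)).neg).div_const (q - 1) using 1
    rw [sub_sub_cancel_left, id]
    field_simp [show q - 1 ≠ 0 by linarith]
    ring
  have hlim : Tendsto (fun s : ℝ => -(1 + s) ^ (1 - q) / (q - 1)) atTop (𝓝 (-0 / (q - 1))) := by
    refine ((tendsto_rpow_neg_atTop (y := q - 1) (by linarith)).comp
      (tendsto_atTop_add_const_left _ 1 tendsto_id)).neg.div_const _ |>.congr fun s => ?_
    simp [neg_sub]
  rw [integral_Ioi_of_hasDerivAt_of_tendsto' hderiv (integrableOn_one_add_rpow_neg_Ioi hq) hlim]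
  simp [neg_div]

theorem setIntegral_le_mul_setIntegral_of_le {α : Type*} [MeasurableSpace α] {μ : Measure α}
    {f g : α → ℝ} {S T : Set α} {K : ℝ} (hS : MeasurableSet S) (hT : MeasurableSet T) (hST : S ⊆ T)
    (hg : IntegrableOn g T μ) (hg0 : ∀ x ∈ T, 0 ≤ g x) (hK : 0 ≤ K)
    (hf0 : ∀ x ∈ S, 0 ≤ f x) (hfg : ∀ x ∈ S, f x ≤ K * g x) :
    ∫ x in S, f x ∂μ ≤ K * ∫ x in T, g x ∂μ := by
  calc ∫ x in S, f x ∂μ ≤ ∫ x in S, K * g x ∂μ :=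
        integral_mono_of_nonneg (ae_restrict_of_forall_mem hS hf0)
          ((hg.mono_set hST).const_mul K) (ae_restrict_of_forall_mem hS hfg)
    _ ≤ ∫ x in T, K * g x ∂μ :=
        setIntegral_mono_set (hg.const_mul K)
          (ae_restrict_of_forall_mem hT fun x hx => mul_nonneg hK (hg0 x hx))
          hST.eventuallyLE
    _ = K * ∫ x in T, g x ∂μ := integral_const_mul K _

theorem setIntegral_le_of_le_mul_one_add_rpow_neg {f : ℝ → ℝ} {S : Set ℝ} {K q : ℝ} (hq : 1 < q)
    (hS : MeasurableSet S) (hS0 : S ⊆ Ioi 0) (hK : 0 ≤ K) (hf0 : ∀ s ∈ S, 0 ≤ f s)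
    (hf : ∀ s ∈ S, f s ≤ K * (1 + s) ^ (-q)) :
    ∫ s in S, f s ≤ K / (q - 1) := by
  calc ∫ s in S, f s ≤ K * ∫ s in Ioi 0, (1 + s) ^ (-q) :=
        setIntegral_le_mul_setIntegral_of_le hS measurableSet_Ioi hS0
          (integrableOn_one_add_rpow_neg_Ioi hq) (fun s hs => rpow_nonneg (by linarith [hs.out]) _)
          hK hf0 hf
    _ = K / (q - 1) := by rw [integral_one_add_rpow_neg_Ioi hq, mul_one_div]

theorem integrable_exp_neg_sq_sub_mul_div {z ρ N : ℝ} (hρ : ρ ≠ 0) (hN : 0 < N) :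
    Integrable (fun s : ℝ => exp (-(z - ρ * s) ^ 2 / N)) := by
  have := ((integrable_exp_neg_mul_sq (inv_pos.2 hN)).comp_sub_right z).comp_mul_left' hρ
  refine this.congr (Eventually.of_forall fun s => ?_)
  ring_nf

theorem integral_exp_neg_sq_sub_mul_div (z ρ N : ℝ) :
    ∫ s : ℝ, exp (-(z - ρ * s) ^ 2 / N) = √(π * N) / |ρ| := by
  have h := Measure.integral_comp_mul_left (fun u : ℝ => exp (-N⁻¹ * (u - z) ^ 2)) ρ
  rw [integral_sub_right_eq_self (fun u : ℝ => exp (-N⁻¹ * u ^ 2)) z, integral_gaussian,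
    div_inv_eq_mul, abs_inv, smul_eq_mul] at h
  rw [div_eq_inv_mul, ← h]
  congr 1 with s
  ring_nf

theorem integral_rpow_neg_half_mul_exp_neg_sq_sub_mul_div (z ρ N : ℝ) {t : ℝ} (ht : 0 < t) :
    ∫ s : ℝ, t ^ (-(1/2 : ℝ)) * exp (-(z - ρ * s) ^ 2 / (N * t)) = √(π * N) / |ρ| := by
  rw [integral_const_mul, integral_exp_neg_sq_sub_mul_div, ← mul_assoc, sqrt_mul' _ ht.le,
    rpow_neg ht.le, ← sqrt_eq_rpow]
  field_simp

theorem setIntegral_le_of_le_mul_gaussian {f : ℝ → ℝ} {S : Set ℝ} {K z ρ N t : ℝ} (hρ : 0 < ρ)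
    (hN : 0 < N) (ht : 0 < t) (hS : MeasurableSet S) (hK : 0 ≤ K) (hf0 : ∀ s ∈ S, 0 ≤ f s)
    (hf : ∀ s ∈ S, f s ≤ K * (t ^ (-(1/2 : ℝ)) * exp (-(z - ρ * s) ^ 2 / (N * t)))) :
    ∫ s in S, f s ≤ K * (√(π * N) / ρ) := by
  calc ∫ s in S, f s ≤ K * ∫ s in univ, t ^ (-(1/2 : ℝ)) * exp (-(z - ρ * s) ^ 2 / (N * t)) :=
        setIntegral_le_mul_setIntegral_of_le hS MeasurableSet.univ (subset_univ S)
          ((integrable_exp_neg_sq_sub_mul_div hρ.ne' (by positivity)).const_mul _).integrableOn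
          (fun s _ => by positivity) hK hf0 hf
    _ = K * (√(π * N) / ρ) := by
        rw [setIntegral_univ, integral_rpow_neg_half_mul_exp_neg_sq_sub_mul_div _ _ _ ht,
          abs_of_pos hρ]

theorem exp_neg_sq_div_le_one (x : ℝ) {a : ℝ} (ha : 0 ≤ a) : exp (-x ^ 2 / a) ≤ 1 := by
  rw [exp_le_one_iff, neg_div]; exact neg_nonpos.2 (by positivity)

theorem exp_neg_sq_div_le_mul_exp {M M' N σ t z w : ℝ} (hM' : 0 < M') (hσ : 0 < σ) (ht : 0 < t)
    (hMN : 1 / (σ ^ 2 * M') + 1 / N ≤ 1 / M) (hzw : σ * |z| ≤ |w|) :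
    exp (-w ^ 2 / (M * t)) ≤ exp (-z ^ 2 / (M' * t)) * exp (-w ^ 2 / (N * t)) := by
  have hsq : σ ^ 2 * z ^ 2 ≤ w ^ 2 := by
    simpa only [mul_pow, sq_abs] using pow_le_pow_left₀ (by positivity) hzw 2
  have key : z ^ 2 / M' + w ^ 2 / N ≤ w ^ 2 / M := by
    calc z ^ 2 / M' + w ^ 2 / N ≤ w ^ 2 * (1 / (σ ^ 2 * M') + 1 / N) := by
          rw [mul_add, mul_one_div (w ^ 2) N, mul_one_div, add_le_add_iff_right,
            div_le_div_iff₀ hM' (by positivity)]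
          nlinarith
      _ ≤ w ^ 2 / M := by
          rw [← mul_one_div (w ^ 2) M]; exact mul_le_mul_of_nonneg_left hMN (sq_nonneg w)
  have hdiv : ∀ a b : ℝ, -a / (b * t) = -(a / b) / t := fun a b => by ring
  rw [← exp_add, exp_le_exp, hdiv, hdiv, hdiv, ← add_div, div_le_div_iff_of_pos_right ht]
  linarith

theorem exists_lt_one_one_div_sq_mul_add_one_div_le {M M' : ℝ} (hM : 0 < M) (hMM' : M < M') :
    ∃ σ N : ℝ, 0 < σ ∧ σ < 1 ∧ 0 < N ∧ 1 / (σ ^ 2 * M') + 1 / N ≤ 1 / M := by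
  have hM' : 0 < M' := hM.trans hMM'
  have hM'M : M' - M ≠ 0 := by linarith
  refine ⟨(M + M') / (2 * M'), M * (M + M') ^ 2 / (M' - M) ^ 2, by positivity,
    by rw [div_lt_one (by positivity)]; linarith, by positivity, le_of_eq ?_⟩
  field_simp
  ring

theorem one_sub_mul_abs_le_of_abs_sub_lt {σ w z : ℝ} (hw : 0 ≤ w) (h : |z - w| < σ * |z|) :
    (1 - σ) * |z| ≤ w := by
  have := abs_sub_abs_le_abs_sub z (z - w)
  rw [sub_sub_cancel, abs_of_nonneg hw] at this
  linarith

theorem one_add_rpow_neg_le_of_mul_le {c q s z : ℝ} (hc : 0 < c) (hq : 0 ≤ q) (hz : 0 ≤ z)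
    (hs : c * z ≤ s) :
    (1 + s) ^ (-q) ≤ (min 1 c) ^ (-q) * (1 + z) ^ (-q) := by
  have hle : min 1 c * (1 + z) ≤ 1 + s := by
    nlinarith [min_le_left 1 c, min_le_right 1 c]
  rw [← mul_rpow (lt_min one_pos hc).le (by linarith)]
  exact rpow_le_rpow_of_nonpos (by positivity) hle (by linarith)

theorem min_rpow_neg_half_one_le {t : ℝ} (ht : 0 < t) :
    min (t ^ (-(1/2 : ℝ))) 1 ≤ √2 * (1 + t) ^ (-(1/2 : ℝ)) := by
  rw [rpow_neg ht.le, rpow_neg (by positivity), ← sqrt_eq_rpow, ← sqrt_eq_rpow,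
    ← div_eq_mul_inv, le_div_iff₀ (by positivity)]
  rcases le_total t 1 with h | h
  · calc min (√t)⁻¹ 1 * √(1 + t) ≤ 1 * √(1 + t) := by gcongr; exact min_le_right _ _
      _ ≤ √2 := by rw [one_mul]; exact sqrt_le_sqrt (by linarith)
  · calc min (√t)⁻¹ 1 * √(1 + t) ≤ (√t)⁻¹ * √(1 + t) := by gcongr; exact min_le_left _ _
      _ ≤ √2 := by
        rw [inv_mul_le_iff₀ (by positivity), ← sqrt_mul ht.le]
        exact sqrt_le_sqrt (by linarith)

noncomputable def gaussianWeightIntegrand (M ρ q z t s : ℝ) : ℝ :=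
  t ^ (-(1/2 : ℝ)) * exp (-(z - ρ * s) ^ 2 / (M * t)) * (1 + s) ^ (-q)

section GaussianWeightIntegrand

variable {M ρ q z t : ℝ}

theorem gaussianWeightIntegrand_nonneg (ht : 0 < t) {s : ℝ} (hs : 0 ≤ s) :
    0 ≤ gaussianWeightIntegrand M ρ q z t s := by
  unfold gaussianWeightIntegrand; positivity

theorem gaussianWeightIntegrand_le (hM : 0 < M) (ht : 0 < t) {s : ℝ} (hs : 0 ≤ s) :
    gaussianWeightIntegrand M ρ q z t s ≤ t ^ (-(1/2 : ℝ)) * (1 + s) ^ (-q) := by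
  unfold gaussianWeightIntegrand
  gcongr
  exact mul_le_of_le_one_right (by positivity) (exp_neg_sq_div_le_one _ (by positivity))

theorem integrableOn_gaussianWeightIntegrand (hM : 0 < M) (ht : 0 < t) (hq : 1 < q) :
    IntegrableOn (gaussianWeightIntegrand M ρ q z t) (Ioi 0) := by
  refine ((integrableOn_one_add_rpow_neg_Ioi hq).const_mul (t ^ (-(1/2 : ℝ)))).mono' ?_ ?_
  · unfold gaussianWeightIntegrand; fun_prop
  · refine ae_restrict_of_forall_mem measurableSet_Ioi fun s hs => ?_
    rw [norm_of_nonneg (gaussianWeightIntegrand_nonneg ht hs.out.le)]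
    exact gaussianWeightIntegrand_le hM ht hs.out.le

theorem setIntegral_gaussianWeightIntegrand_le_of_far (hM : 0 < M) (hρ : 0 < ρ) (hq : 1 < q)
    (ht : 0 < t) {σ : ℝ} (hσ : σ < 1) {S : Set ℝ} (hS : MeasurableSet S) (hS0 : S ⊆ Ioi 0)
    (hfar : ∀ s ∈ S, |z - ρ * s| < σ * |z|) :
    ∫ s in S, gaussianWeightIntegrand M ρ q z t s ≤
      min (t ^ (-(1/2 : ℝ)) / (q - 1))
        ((min 1 ((1 - σ) / ρ)) ^ (-q) * √(π * M) / ρ * (1 + |z|) ^ (-q)) := by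
  have hf0 : ∀ s ∈ S, 0 ≤ gaussianWeightIntegrand M ρ q z t s := fun s hs =>
    gaussianWeightIntegrand_nonneg ht (hS0 hs).le
  set K := (min 1 ((1 - σ) / ρ)) ^ (-q) * (1 + |z|) ^ (-q)
  refine le_min (setIntegral_le_of_le_mul_one_add_rpow_neg hq hS hS0 (by positivity) hf0
    fun s hs => gaussianWeightIntegrand_le hM ht (hS0 hs).le) ?_
  calc ∫ s in S, gaussianWeightIntegrand M ρ q z t s ≤ K * (√(π * M) / ρ) := by
        refine setIntegral_le_of_le_mul_gaussian (z := z) hρ hM ht hS (by positivity) hf0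
          fun s hs => ?_
        have hs0 : 0 < s := hS0 hs
        have hσs : (1 - σ) / ρ * |z| ≤ s := by
          rw [div_mul_eq_mul_div, div_le_iff₀ hρ, mul_comm s]
          exact one_sub_mul_abs_le_of_abs_sub_lt (by positivity) (hfar s hs)
        rw [gaussianWeightIntegrand, mul_comm K]
        gcongr
        exact one_add_rpow_neg_le_of_mul_le (div_pos (by linarith) hρ) (zero_le_one.trans hq.le)
          (abs_nonneg z) hσs
    _ = (min 1 ((1 - σ) / ρ)) ^ (-q) * √(π * M) / ρ * (1 + |z|) ^ (-q) := by ring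

theorem setIntegral_gaussianWeightIntegrand_le_of_near (hρ : 0 < ρ) (hq : 1 < q) (ht : 0 < t)
    {M' N σ : ℝ} (hM' : 0 < M') (hN : 0 < N) (hσ : 0 < σ)
    (hMN : 1 / (σ ^ 2 * M') + 1 / N ≤ 1 / M) {S : Set ℝ} (hS : MeasurableSet S)
    (hS0 : S ⊆ Ioi 0) (hnear : ∀ s ∈ S, σ * |z| ≤ |z - ρ * s|) :
    ∫ s in S, gaussianWeightIntegrand M ρ q z t s ≤
      exp (-z ^ 2 / (M' * t)) * min (t ^ (-(1/2 : ℝ)) / (q - 1)) (√(π * N) / ρ) := by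
  set E := exp (-z ^ 2 / (M' * t))
  have hf0 : ∀ s ∈ S, 0 ≤ gaussianWeightIntegrand M ρ q z t s := fun s hs =>
    gaussianWeightIntegrand_nonneg ht (hS0 hs).le
  have hpt : ∀ s ∈ S, gaussianWeightIntegrand M ρ q z t s ≤
      E * (t ^ (-(1/2 : ℝ)) * exp (-(z - ρ * s) ^ 2 / (N * t))) * (1 + s) ^ (-q) := by
    intro s hs
    have hs0 : 0 < s := hS0 hs
    rw [gaussianWeightIntegrand, mul_left_comm E]
    gcongr
    exact exp_neg_sq_div_le_mul_exp hM' hσ ht hMN (hnear s hs)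
  rw [mul_min_of_nonneg _ _ (exp_pos _).le, ← mul_div_assoc]
  refine le_min ?_ ?_
  · refine setIntegral_le_of_le_mul_one_add_rpow_neg hq hS hS0 (by positivity) hf0
      fun s hs => (hpt s hs).trans ?_
    have hs0 : 0 < s := hS0 hs
    gcongr
    exact mul_le_of_le_one_right (by positivity) (exp_neg_sq_div_le_one _ (by positivity))
  · refine setIntegral_le_of_le_mul_gaussian (z := z) hρ hN ht hS (by positivity) hf0
      fun s hs => (hpt s hs).trans ?_
    have hs0 : 0 < s := hS0 hs
    exact mul_le_of_le_one_right (by positivity)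
      (rpow_le_one_of_one_le_of_nonpos (by linarith) (by linarith))

end GaussianWeightIntegrand

theorem exists_integral_gaussianWeightIntegrand_le {M M' ρ q : ℝ} (hM : 0 < M) (hMM' : M < M')
    (hρ : 0 < ρ) (hq : 1 < q) :
    ∃ C > 0, ∀ z t : ℝ, 0 < t →
      ∫ s in Ioi 0, gaussianWeightIntegrand M ρ q z t s ≤
        C * (min (t ^ (-(1/2 : ℝ))) ((1 + |z|) ^ (-q)) +
          (1 + t) ^ (-(1/2 : ℝ)) * exp (-z ^ 2 / (M' * t))) := by
  obtain ⟨σ, N, hσ, hσ1, hN, hMN⟩ := exists_lt_one_one_div_sq_mul_add_one_div_le hM hMM'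
  set A := 1 / (q - 1)
  set AN := √(π * N) / ρ
  set AM := (min 1 ((1 - σ) / ρ)) ^ (-q) * √(π * M) / ρ
  have hA : 0 < A := one_div_pos.2 (by linarith)
  have hAN : 0 ≤ AN := by positivity
  have hAM : 0 ≤ AM := by positivity
  set B := A + AN + AM
  have hB : 0 < B := by positivity
  refine ⟨√2 * B, by positivity, fun z t ht => ?_⟩
  set F := {s : ℝ | |z - ρ * s| < σ * |z|}
  have hF : MeasurableSet F := measurableSet_lt (by fun_prop) (by fun_prop)
  rw [← integral_inter_add_sdiff hF (integrableOn_gaussianWeightIntegrand hM ht hq)]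
  have hfar := setIntegral_gaussianWeightIntegrand_le_of_far hM hρ hq ht hσ1
    (measurableSet_Ioi.inter hF) inter_subset_left fun s hs => hs.2
  have hnear := setIntegral_gaussianWeightIntegrand_le_of_near hρ hq ht (hM.trans hMM') hN hσ hMN
    (measurableSet_Ioi.diff hF) sdiff_subset fun s hs => not_lt.1 hs.2
  set T := t ^ (-(1/2 : ℝ))
  set m := min T ((1 + |z|) ^ (-q))
  set G := (1 + t) ^ (-(1/2 : ℝ)) * exp (-z ^ 2 / (M' * t))
  have hfar_B : min (T / (q - 1)) (AM * (1 + |z|) ^ (-q)) ≤ B * m := by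
    rw [mul_min_of_nonneg _ _ hB.le, div_eq_mul_one_div, mul_comm T]
    gcongr <;> linarith
  have hnear_B : min (T / (q - 1)) AN ≤ √2 * B * (1 + t) ^ (-(1/2 : ℝ)) :=
    calc min (T / (q - 1)) AN ≤ B * min T 1 := by
          rw [mul_min_of_nonneg _ _ hB.le, mul_one, div_eq_mul_one_div, mul_comm T]
          gcongr <;> linarith
      _ ≤ √2 * B * (1 + t) ^ (-(1/2 : ℝ)) := by
          rw [mul_comm √2, mul_assoc]; gcongr; exact min_rpow_neg_half_one_le ht
  have hB2 : B * m ≤ √2 * B * m :=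
    mul_le_mul_of_nonneg_right (le_mul_of_one_le_left hB.le (one_le_sqrt.2 one_le_two))
      (le_min (by positivity) (by positivity))
  calc _ ≤ B * m + exp (-z ^ 2 / (M' * t)) * (√2 * B * (1 + t) ^ (-(1/2 : ℝ))) :=
        add_le_add (hfar.trans hfar_B) (hnear.trans (by gcongr))
    _ ≤ √2 * B * (m + G) := by linarith

theorem reflection_estimate (M M' r b : ℝ) (hM : 0 < M) (hM' : M < M')
    (hr : r < 0) :
    ∃ C > 0, ∀ (x t : ℝ), 0 < t →
      (∫ y in Set.Iic (0:ℝ),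
          t ^ (-(1/2 : ℝ)) * Real.exp (-(x - r*y - b*t)^2 / (M*t)) *
            (1 + |y|) ^ (-(3/2 : ℝ))) ≤
        C * (min (t ^ (-(1/2 : ℝ))) ((1 + |x - b*t|) ^ (-(3/2 : ℝ))) +
          (1 + t) ^ (-(1/2 : ℝ)) * Real.exp (-(x - b*t)^2 / (M'*t))) := by
  obtain ⟨C, hC, hbound⟩ :=
    exists_integral_gaussianWeightIntegrand_le (ρ := -r) (q := 3/2) hM hM' (neg_pos.2 hr)
      (by norm_num)
  refine ⟨C, hC, fun x t ht => ?_⟩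
  have hreflect := integral_comp_neg_Ioi 0 fun y : ℝ =>
    t ^ (-(1/2 : ℝ)) * exp (-(x - r * y - b * t) ^ 2 / (M * t)) * (1 + |y|) ^ (-(3/2 : ℝ))
  rw [neg_zero] at hreflect
  rw [← hreflect, setIntegral_congr_fun measurableSet_Ioi fun s hs => ?_]
  · exact hbound (x - b * t) t ht
  · rw [gaussianWeightIntegrand, abs_neg, abs_of_pos hs]
    ring_nf
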